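/- Let n ≥ 1 and α, β̃ ∈ ℂⁿ. Let Ψ and Φ be n×n matrices over ℂ((z)) with Ψ·Φ = Φ·Ψ = 1, where Ψ has order ≥ 0, Φ has order ≥ −1 with Φ_{−1} = α·β̃ᵀ, and Ψ₀·α = 0. Let h be a diagonal n×n matrix over ℂ((z)) of order ≥ 0. Then L := Φ·h·Ψ has order ≥ −1 and there exist β ∈ ℂⁿ and κ ∈ ℂ such that L_{−1} = α·βᵀ, βᵀα = 0, and L_0·α = κ·α. (This is the gl(n) case of the Lemma: for any h in the commutative Krichever-Novikov current algebra, Ψ⁻¹hΨ lies in the Lax operator algebra — localized at a Tyurin point γ.) -/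

import Mathlib

open Matrix

/-- The matrix of `z^k`-coefficients of a matrix of formal Laurent series. -/
noncomputable def coeffM {n : ℕ} (A : Matrix (Fin n) (Fin n) (LaurentSeries ℂ)) (k : ℤ) :
    Matrix (Fin n) (Fin n) ℂ :=
  fun i j => (A i j).coeff k

/-- `A` has order `≥ m`: all coefficients below `m` vanish. -/
def ordGE {n : ℕ} (A : Matrix (Fin n) (Fin n) (LaurentSeries ℂ)) (m : ℤ) : Prop :=
  ∀ k : ℤ, k < m → coeffM A k = 0

/-!
Only the principal part of `L = (Φ h) Ψ` matters. The residue `(Φ h)₋₁ = α β̃ᵀ h₀` has image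
`ℂ α`, and right multiplication by the holomorphic `Ψ` with `Ψ₀ α = 0` preserves this shape:
`L₋₁ = α (β̃ᵀ h₀ Ψ₀)`, whose row vector kills `α`, and `L₀ α = (Φ h)₋₁ Ψ₁ α + (Φ h)₀ Ψ₀ α` is
a multiple of `α`.
-/

theorem HahnSeries.coeff_mul_eq_sum_Icc {R : Type*} [NonUnitalNonAssocSemiring R]
    {f g : HahnSeries ℤ R} {a b : ℤ}
    (hf : ∀ i < a, f.coeff i = 0) (hg : ∀ j < b, g.coeff j = 0) (k : ℤ) :
    (f * g).coeff k = ∑ i ∈ Finset.Icc a (k - b), f.coeff i * g.coeff (k - i) := by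
  have ha_le {i} (hi : f.coeff i ≠ 0) : a ≤ i := not_lt.1 fun h => hi (hf i h)
  have hb_le {j} (hj : g.coeff j ≠ 0) : b ≤ j := not_lt.1 fun h => hj (hg j h)
  rw [coeff_mul]
  refine Finset.sum_of_injOn Prod.fst ?_ ?_ ?_ ?_
  · rintro ⟨i, j⟩ hij ⟨i', j'⟩ hij' (rfl : i = i')
    simp only [Finset.mem_coe, Finset.mem_antidiagonal] at hij hij'
    simp only [Prod.mk.injEq, true_and]
    omega
  · rintro ⟨i, j⟩ hij
    simp only [Finset.mem_coe, Finset.mem_antidiagonal, mem_support] at hij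
    simp only [Finset.coe_Icc, Set.mem_Icc]
    have := ha_le hij.1
    have := hb_le hij.2.1
    omega
  · intro i _ hi
    by_contra hne
    refine hi ⟨(i, k - i), ?_, rfl⟩
    simp only [Finset.mem_coe, Finset.mem_antidiagonal, mem_support]
    exact ⟨left_ne_zero_of_mul hne, right_ne_zero_of_mul hne, by ring⟩
  · rintro ⟨i, j⟩ hij
    rw [Finset.mem_antidiagonal] at hij
    rw [← hij.2.2, add_sub_cancel_left]

section coeffM

variable {n : ℕ} {A B : Matrix (Fin n) (Fin n) (LaurentSeries ℂ)} {a b : ℤ}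

theorem coeffM_mul_eq_sum_Icc (hA : ordGE A a) (hB : ordGE B b) (k : ℤ) :
    coeffM (A * B) k = ∑ i ∈ Finset.Icc a (k - b), coeffM A i * coeffM B (k - i) := by
  ext p q
  simp only [coeffM, mul_apply, Matrix.sum_apply, HahnSeries.coeff_sum]
  rw [Finset.sum_comm]
  refine Finset.sum_congr rfl fun l _ => HahnSeries.coeff_mul_eq_sum_Icc ?_ ?_ k
  · exact fun i hi => congrFun (congrFun (hA i hi) p) l
  · exact fun j hj => congrFun (congrFun (hB j hj) l) q

theorem ordGE_mul (hA : ordGE A a) (hB : ordGE B b) : ordGE (A * B) (a + b) := by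
  intro k hk
  rw [coeffM_mul_eq_sum_Icc hA hB, Finset.Icc_eq_empty (by omega), Finset.sum_empty]

theorem coeffM_mul_add (hA : ordGE A a) (hB : ordGE B b) :
    coeffM (A * B) (a + b) = coeffM A a * coeffM B b := by
  rw [coeffM_mul_eq_sum_Icc hA hB, add_sub_cancel_right, Finset.Icc_self, Finset.sum_singleton,
    add_sub_cancel_left]

theorem coeffM_mul_add_add_one (hA : ordGE A a) (hB : ordGE B b) :
    coeffM (A * B) (a + b + 1) =
      coeffM A a * coeffM B (b + 1) + coeffM A (a + 1) * coeffM B b := by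
  have hIcc : Finset.Icc a (a + b + 1 - b) = {a, a + 1} := by
    ext i; simp only [Finset.mem_Icc, Finset.mem_insert, Finset.mem_singleton]; omega
  rw [coeffM_mul_eq_sum_Icc hA hB, hIcc, Finset.sum_pair (by omega)]
  congr 3 <;> ring

end coeffM

/-- The local conditions at a Tyurin point with parameter `α` defining the `gl(n)` Lax operator
algebra. -/
def IsLaxAt {n : ℕ} (α : Fin n → ℂ) (L : Matrix (Fin n) (Fin n) (LaurentSeries ℂ)) : Prop :=
  ordGE L (-1) ∧ ∃ (β : Fin n → ℂ) (κ : ℂ),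
    coeffM L (-1) = vecMulVec α β ∧ β ⬝ᵥ α = 0 ∧ coeffM L 0 *ᵥ α = κ • α

theorem isLaxAt_mul {n : ℕ} {α γ : Fin n → ℂ} {P Ψ : Matrix (Fin n) (Fin n) (LaurentSeries ℂ)}
    (hP : ordGE P (-1)) (hP_neg_one : coeffM P (-1) = vecMulVec α γ)
    (hΨ : ordGE Ψ 0) (hΨα : coeffM Ψ 0 *ᵥ α = 0) :
    IsLaxAt α (P * Ψ) := by
  have hL_neg_one : coeffM (P * Ψ) (-1) = vecMulVec α (γ ᵥ* coeffM Ψ 0) := by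
    simpa [hP_neg_one, vecMulVec_mul] using coeffM_mul_add hP hΨ
  have hL_zero : coeffM (P * Ψ) 0 =
      vecMulVec α γ * coeffM Ψ 1 + coeffM P 0 * coeffM Ψ 0 := by
    simpa [hP_neg_one] using coeffM_mul_add_add_one hP hΨ
  refine ⟨by simpa using ordGE_mul hP hΨ, _, γ ⬝ᵥ (coeffM Ψ 1 *ᵥ α), hL_neg_one, ?_, ?_⟩
  · rw [← dotProduct_mulVec, hΨα, dotProduct_zero]
  · rw [hL_zero, add_mulVec, ← mulVec_mulVec, ← mulVec_mulVec, hΨα, mulVec_zero, add_zero,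
      vecMulVec_mulVec, op_smul_eq_smul]

theorem conjugated_diagonal_is_lax_gl_general (n : ℕ)
    (α βt : Fin n → ℂ)
    (Ψ Φ : Matrix (Fin n) (Fin n) (LaurentSeries ℂ))
    (hΨord : ordGE Ψ 0)
    (hΦord : ordGE Φ (-1)) (hΦm1 : coeffM Φ (-1) = vecMulVec α βt)
    (hΨ₀α : (coeffM Ψ 0).mulVec α = 0)
    (h : Matrix (Fin n) (Fin n) (LaurentSeries ℂ))
    (hhord : ordGE h 0) :
    ordGE (Φ * h * Ψ) (-1) ∧
    ∃ (β : Fin n → ℂ) (κ : ℂ),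
      coeffM (Φ * h * Ψ) (-1) = vecMulVec α β ∧
      β ⬝ᵥ α = 0 ∧
      (coeffM (Φ * h * Ψ) 0).mulVec α = κ • α := by
  have hΦh : ordGE (Φ * h) (-1) := by simpa using ordGE_mul hΦord hhord
  have hΦh_neg_one : coeffM (Φ * h) (-1) = vecMulVec α (βt ᵥ* coeffM h 0) := by
    simpa [hΦm1, vecMulVec_mul] using coeffM_mul_add hΦord hhord
  exact isLaxAt_mul hΦh hΦh_neg_one hΨord hΨ₀α

/-- The `gl(n)` case of the Lemma: for any diagonal `h`, the matrix `Ψ⁻¹hΨ` lies in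
the Lax operator algebra, localized at a Tyurin point. -/
theorem conjugated_diagonal_is_lax_gl (n : ℕ) (hn : 1 ≤ n)
    (α βt : Fin n → ℂ)
    (Ψ Φ : Matrix (Fin n) (Fin n) (LaurentSeries ℂ))
    (hΨΦ : Ψ * Φ = 1) (hΦΨ : Φ * Ψ = 1)
    (hΨord : ordGE Ψ 0)
    (hΦord : ordGE Φ (-1)) (hΦm1 : coeffM Φ (-1) = vecMulVec α βt)
    (hΨ₀α : (coeffM Ψ 0).mulVec α = 0)
    (h : Matrix (Fin n) (Fin n) (LaurentSeries ℂ))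
    (hhord : ordGE h 0) (hhdiag : ∀ k : ℤ, (coeffM h k).IsDiag) :
    ordGE (Φ * h * Ψ) (-1) ∧
    ∃ (β : Fin n → ℂ) (κ : ℂ),
      coeffM (Φ * h * Ψ) (-1) = vecMulVec α β ∧
      β ⬝ᵥ α = 0 ∧
      (coeffM (Φ * h * Ψ) 0).mulVec α = κ • α :=
  conjugated_diagonal_is_lax_gl_general n α βt Ψ Φ hΨord hΦord hΦm1 hΨ₀α h hhord
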